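/- In the BP encoding of a binary tree, given two nodes u ≤ v (identified with the indices of their closing parentheses), the position of the leftmost minimum of the excess function on the interval [u, v] is the closing parenthesis of the lowest common ancestor of u and v. -/

import Mathlib

/-!
Induction on the tree. If both paths leave the root in the same direction, the lowest common
ancestor lies in that subtree, whose encoding sits inside `BP(t)` at a fixed offset and with a
fixed excess offset, so the claim transfers from the subtree. Otherwise the lowest common
ancestor is the root, whose closing parenthesis lies between `u` and `v`; right after it the
excess is `0`, the least possible value, while at every earlier position the still open root
`(` makes the excess positive.
-/

/-- A binary tree: `leaf` is the empty tree; each internal node has an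
optional left and an optional right subtree (possibly `leaf`). -/
inductive BinTree : Type where
  | leaf : BinTree
  | node : BinTree → BinTree → BinTree
deriving DecidableEq

namespace BinTree

/-- Number of nodes of a binary tree. -/
def size : BinTree → ℕ
  | leaf => 0
  | node l r => l.size + r.size + 1

/-- BalancedBP-parenthesis encoding of binary trees:
`BP(empty) = ε`, `BP(t) = '(' ++ BP(t_l) ++ ')' ++ BP(t_r)`.
`true` is an opening parenthesis, `false` a closing one. -/
def bp : BinTree → List Bool
  | leaf => []
  | node l r => true :: (l.bp ++ false :: r.bp)

/-- The subtree reached by following a path (`false` = left, `true` = right). -/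
def subtreeAt : BinTree → List Bool → Option BinTree
  | t, [] => some t
  | leaf, _ :: _ => none
  | node l _, false :: p => subtreeAt l p
  | node _ r, true :: p => subtreeAt r p

/-- A path identifies an actual node of the tree (not an empty slot). -/
def ValidPath (t : BinTree) (p : List Bool) : Prop :=
  ∃ l r, subtreeAt t p = some (node l r)

/-- Index (0-based) of the opening parenthesis of the node at a path. -/
def openIdx : BinTree → List Bool → Option ℕ
  | leaf, _ => none
  | node _ _, [] => some 0
  | node l _, false :: p => (openIdx l p).map (· + 1)
  | node l r, true :: p => (openIdx r p).map (· + (l.bp.length + 2))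

/-- Index (0-based) of the closing parenthesis of the node at a path. -/
def closeIdx : BinTree → List Bool → Option ℕ
  | leaf, _ => none
  | node l _, [] => some (l.bp.length + 1)
  | node l _, false :: p => (closeIdx l p).map (· + 1)
  | node l r, true :: p => (closeIdx r p).map (· + (l.bp.length + 2))

/-- Inorder rank (0-based) of the node at a path. -/
def inorderIdx : BinTree → List Bool → Option ℕ
  | leaf, _ => none
  | node l _, [] => some l.size
  | node l _, false :: p => inorderIdx l p
  | node l r, true :: p => (inorderIdx r p).map (· + (l.size + 1))

end BinTree

/-- A sequence of parentheses (`true` = '(') is balanced: equally many opening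
and closing parentheses, and every prefix has at least as many opening ones. -/
def BalancedBP (s : List Bool) : Prop :=
  s.count true = s.count false ∧
  ∀ k, (s.take k).count false ≤ (s.take k).count true

/-- `excess s k`: number of opening minus closing parentheses among the first `k` symbols. -/
def excess (s : List Bool) (k : ℕ) : ℤ :=
  ((s.take k).count true : ℤ) - ((s.take k).count false : ℤ)

/-- `IsMatch s i j`: positions `i < j` form a matching pair of parentheses
(the standard stack-based matching). -/
def IsMatch (s : List Bool) (i j : ℕ) : Prop :=
  i < j ∧ j < s.length ∧ s[i]? = some true ∧ s[j]? = some false ∧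
  excess s (j + 1) = excess s i ∧
  ∀ k, i < k → k ≤ j → excess s i < excess s k

/-- `EnclosePair s i v j`: `j` is the closing parenthesis whose matching pair
tightly encloses the matching pair `(i, v)`. -/
def EnclosePair (s : List Bool) (i v j : ℕ) : Prop :=
  (∃ i', IsMatch s i' j ∧ i' < i ∧ v < j) ∧
  ∀ i'' j'', IsMatch s i'' j'' → i'' < i → v < j'' → j ≤ j''

/-- Longest common prefix of two paths. -/
def lcp : List Bool → List Bool → List Bool
  | a :: as, b :: bs => if a = b then a :: lcp as bs else []
  | _, _ => []

def IsLeftmostMinOn (f : ℕ → ℤ) (u v w : ℕ) : Prop :=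
  u ≤ w ∧ w ≤ v ∧
    (∀ k, u ≤ k → k ≤ v → f w ≤ f k) ∧ (∀ k, u ≤ k → k < w → f w < f k)

theorem IsLeftmostMinOn.shift {f g : ℕ → ℤ} {u v w : ℕ} (d : ℕ) (c : ℤ)
    (hfg : ∀ k, u ≤ k → k ≤ v → f (k + d) = c + g k) (h : IsLeftmostMinOn g u v w) :
    IsLeftmostMinOn f (u + d) (v + d) (w + d) := by
  obtain ⟨huw, hwv, hmin, hlt⟩ := h
  have hfw := hfg w huw hwv
  refine ⟨by omega, by omega, fun k hk hk' => ?_, fun k hk hk' => ?_⟩ <;>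
    obtain ⟨k, rfl⟩ : ∃ j, k = j + d := ⟨k - d, by omega⟩
  · rw [hfw, hfg k (by omega) (by omega)]
    linarith [hmin k (by omega) (by omega)]
  · rw [hfw, hfg k (by omega) (by omega)]
    linarith [hlt k (by omega) (by omega)]

theorem excess_cons_true (s : List Bool) (k : ℕ) :
    excess (true :: s) (k + 1) = 1 + excess s k := by
  simp [excess]
  ring

theorem excess_append_of_le_length {s : List Bool} (t : List Bool) {k : ℕ} (hk : k ≤ s.length) :
    excess (s ++ t) k = excess s k := by
  rw [excess, excess, List.take_append_of_le_length hk]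

theorem excess_append_length_add (s t : List Bool) (k : ℕ) :
    excess (s ++ t) (s.length + k) = excess s s.length + excess t k := by
  simp only [excess, List.take_append, Nat.add_sub_cancel_left, List.count_append,
    List.take_of_length_le (Nat.le_add_right _ _), List.take_length]
  push_cast
  ring

theorem lcp_nil_right (p : List Bool) : lcp p [] = [] := by
  cases p <;> rfl

theorem lcp_cons_self (a : Bool) (p q : List Bool) : lcp (a :: p) (a :: q) = a :: lcp p q := by
  simp [lcp]

namespace BinTree

theorem count_bp (t : BinTree) : t.bp.count true = t.size ∧ t.bp.count false = t.size := by
  induction t with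
  | leaf => simp [bp, size]
  | node l r ihl ihr =>
    simp [bp, size, ihl.1, ihl.2, ihr.1, ihr.2]
    omega

theorem excess_bp_node_of_le {l r : BinTree} {m : ℕ} (hm : m ≤ l.bp.length) :
    excess (node l r).bp (m + 1) = 1 + excess l.bp m := by
  rw [bp, excess_cons_true, excess_append_of_le_length _ hm]

theorem excess_bp_node_right (l r : BinTree) (k : ℕ) :
    excess (node l r).bp (l.bp.length + 2 + k) = excess r.bp k := by
  have hsplit : (node l r).bp = (true :: l.bp ++ [false]) ++ r.bp := by simp [bp]
  have hlen : l.bp.length + 2 = (true :: l.bp ++ [false]).length := by simp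
  rw [hsplit, hlen, excess_append_length_add, excess, List.take_length]
  simp [(count_bp l).1, (count_bp l).2]

theorem excess_bp_nonneg (t : BinTree) (k : ℕ) : 0 ≤ excess t.bp k := by
  induction t generalizing k with
  | leaf => simp [bp, excess]
  | node l r ihl ihr =>
    rcases k with _ | k
    · simp [excess]
    rcases le_or_gt k l.bp.length with hk | hk
    · rw [excess_bp_node_of_le hk]
      linarith [ihl k]
    · obtain ⟨j, rfl⟩ : ∃ j, k = l.bp.length + 1 + j := ⟨k - l.bp.length - 1, by omega⟩
      rw [show l.bp.length + 1 + j + 1 = l.bp.length + 2 + j by omega, excess_bp_node_right]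
      exact ihr j

theorem closeIdx_lt_length {t : BinTree} {p : List Bool} {x : ℕ} (h : t.closeIdx p = some x) :
    x < t.bp.length := by
  induction t generalizing p x with
  | leaf => simp [closeIdx] at h
  | node l r ihl ihr =>
    rcases p with _ | ⟨_ | _, p⟩ <;>
      simp only [closeIdx, Option.map_eq_some_iff, Option.some.injEq] at h
    · simp [bp]; omega
    · obtain ⟨x, hx, rfl⟩ := h
      simp [bp]; linarith [ihl hx]
    · obtain ⟨x, hx, rfl⟩ := h
      simp [bp]; linarith [ihr hx]

theorem closeIdx_node_false {l r : BinTree} {p : List Bool} {x : ℕ}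
    (h : (node l r).closeIdx (false :: p) = some x) :
    ∃ y, l.closeIdx p = some y ∧ y < l.bp.length ∧ x = y + 1 := by
  obtain ⟨y, hy, rfl⟩ := Option.map_eq_some_iff.mp h
  exact ⟨y, hy, closeIdx_lt_length hy, rfl⟩

theorem closeIdx_node_true {l r : BinTree} {p : List Bool} {x : ℕ}
    (h : (node l r).closeIdx (true :: p) = some x) :
    ∃ y, r.closeIdx p = some y ∧ x = y + (l.bp.length + 2) := by
  obtain ⟨y, hy, rfl⟩ := Option.map_eq_some_iff.mp h
  exact ⟨y, hy, rfl⟩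

theorem isLeftmostMinOn_root (l r : BinTree) {u v : ℕ} (hu : u ≤ l.bp.length + 1)
    (hv : l.bp.length + 1 ≤ v) :
    IsLeftmostMinOn (fun k => excess (node l r).bp (k + 1)) u v (l.bp.length + 1) := by
  have hroot : excess (node l r).bp (l.bp.length + 1 + 1) = 0 := by
    simpa [excess] using excess_bp_node_right l r 0
  refine ⟨hu, hv, fun k _ _ => ?_, fun k _ hk => ?_⟩ <;> simp only [hroot]
  · exact excess_bp_nonneg _ _
  · rw [excess_bp_node_of_le (by omega)]
    linarith [excess_bp_nonneg l k]

end BinTree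

open BinTree in
theorem isLeftmostMinOn_closeIdx_lcp (t : BinTree) {pu pv : List Bool} {u v w : ℕ}
    (hu : t.closeIdx pu = some u) (hv : t.closeIdx pv = some v) (huv : u ≤ v)
    (hw : t.closeIdx (lcp pu pv) = some w) :
    IsLeftmostMinOn (fun k => excess t.bp (k + 1)) u v w := by
  induction t generalizing pu pv u v w with
  | leaf => simp [closeIdx] at hu
  | node l r ihl ihr =>
    have hroot : ∀ x, (node l r).closeIdx [] = some x → x = l.bp.length + 1 := by
      simp [closeIdx]
    match pu, pv with
    | [], pv =>
      obtain rfl := hroot u hu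
      obtain rfl := hroot w hw
      exact isLeftmostMinOn_root l r le_rfl huv
    | false :: pu, [] =>
      obtain ⟨u, -, hul, rfl⟩ := closeIdx_node_false hu
      obtain rfl := hroot v hv
      obtain rfl := hroot w (lcp_nil_right _ ▸ hw)
      exact isLeftmostMinOn_root l r (by omega) le_rfl
    | false :: pu, true :: pv =>
      obtain ⟨u, -, hul, rfl⟩ := closeIdx_node_false hu
      obtain ⟨v, -, rfl⟩ := closeIdx_node_true hv
      obtain rfl := hroot w hw
      exact isLeftmostMinOn_root l r (by omega) (by omega)
    | true :: pu, [] =>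
      obtain ⟨u, -, rfl⟩ := closeIdx_node_true hu
      obtain rfl := hroot v hv
      omega
    | true :: pu, false :: pv =>
      obtain ⟨u, -, rfl⟩ := closeIdx_node_true hu
      obtain ⟨v, -, hvl, rfl⟩ := closeIdx_node_false hv
      omega
    | false :: pu, false :: pv =>
      obtain ⟨u, hu', -, rfl⟩ := closeIdx_node_false hu
      obtain ⟨v, hv', hvl, rfl⟩ := closeIdx_node_false hv
      obtain ⟨w, hw', -, rfl⟩ := closeIdx_node_false (lcp_cons_self false pu pv ▸ hw)
      exact (ihl hu' hv' (by omega) hw').shift 1 1 fun k _ hk =>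
        excess_bp_node_of_le (by omega)
    | true :: pu, true :: pv =>
      obtain ⟨u, hu', rfl⟩ := closeIdx_node_true hu
      obtain ⟨v, hv', rfl⟩ := closeIdx_node_true hv
      obtain ⟨w, hw', rfl⟩ := closeIdx_node_true (lcp_cons_self true pu pv ▸ hw)
      refine (ihr hu' hv' (by omega) hw').shift _ 0 fun k _ _ => ?_
      rw [zero_add, ← excess_bp_node_right l r (k + 1)]
      congr 1
      omega

/-- for nodes `u ≤ v` (closing-parenthesis indices), the leftmost
minimum of the excess function on `[u, v]` is at the closing parenthesis of the
lowest common ancestor of `u` and `v`. -/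
theorem lca_eq_rmq (t : BinTree) (pu pv : List Bool) (u v w : ℕ)
    (hu : BinTree.closeIdx t pu = some u) (hv : BinTree.closeIdx t pv = some v)
    (huv : u ≤ v)
    (hw : BinTree.closeIdx t (lcp pu pv) = some w) :
    u ≤ w ∧ w ≤ v ∧
    (∀ k, u ≤ k → k ≤ v → excess t.bp (w + 1) ≤ excess t.bp (k + 1)) ∧
    (∀ k, u ≤ k → k < w → excess t.bp (w + 1) < excess t.bp (k + 1)) :=
  isLeftmostMinOn_closeIdx_lcp t hu hv huv hw
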